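/- arXiv:1811.06460 — 2 statements merged into one kernel-verified Lean document; each statement's English description precedes it below -/
import Mathlib

section
/- Let n, m be strictly positive natural numbers and σ a fixed-point-free permutation of {1,…,m}. Given distinct elements a_i^j for 1 ≤ i ≤ m, 1 ≤ j ≤ n, consider any n sets of the form: the k-th set (1 ≤ k ≤ n) is { a_{i_k}^1, …, a_{i_k}^n } except that its k-th element is a_{σ(i_k)}^k (for k ≥ 2; the first set is { a_{i_1}^1, …, a_{i_1}^n } unmodified), where each i_k ∈ {1,…,m}. Then the intersection of these n sets has at most one element. -/
open Function

section ReplacedRow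

variable {R C α : Type*} {a : R → C → α} {i r s : R} {j k l : C}

theorem apply_eq_apply_iff (ha : Injective (uncurry a)) {i' : R} {j' : C} :
    a i j = a i' j' ↔ i = i' ∧ j = j' :=
  (ha.eq_iff (a := (i, j)) (b := (i', j'))).trans Prod.mk_inj

variable {p : Prop} [Decidable p] [DecidableEq C]

theorem eq_of_apply_eq_ite_of_ne (ha : Injective (uncurry a))
    (h : a i j = if p ∧ l = k then a s l else a r l) (hjk : j ≠ k) : i = r := by
  split_ifs at h with hl
  · exact absurd ((apply_eq_apply_iff ha).1 h).2 (hl.2 ▸ hjk)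
  · exact ((apply_eq_apply_iff ha).1 h).1

theorem eq_of_apply_eq_ite_self (ha : Injective (uncurry a))
    (h : a i k = if p ∧ l = k then a s l else a r l) (hp : p) : i = s := by
  split_ifs at h with hl
  · exact ((apply_eq_apply_iff ha).1 h).1
  · exact absurd ((apply_eq_apply_iff ha).1 h).2.symm fun hlk => hl ⟨hp, hlk⟩

end ReplacedRow

theorem filter_lemma_general {α : Type} (n m : ℕ) (hn : 0 < n)
    (σ : Equiv.Perm (Fin m)) (hσ : ∀ i, σ i ≠ i)
    (a : Fin m → Fin n → α)
    (ha : Function.Injective (fun p : Fin m × Fin n => a p.1 p.2))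
    (ι : Fin n → Fin m) :
    (⋂ k : Fin n,
        { x : α | ∃ j : Fin n,
            x = if (k : ℕ) ≠ 0 ∧ j = k then a (σ (ι k)) j else a (ι k) j }).Subsingleton := by
  intro x hx y hy
  simp only [Set.mem_iInter, Set.mem_ofPred_eq] at hx hy
  obtain ⟨j₁, rfl⟩ : ∃ j, x = a (ι ⟨0, hn⟩) j := by simpa using hx ⟨0, hn⟩
  obtain ⟨j₂, rfl⟩ : ∃ j, y = a (ι ⟨0, hn⟩) j := by simpa using hy ⟨0, hn⟩
  by_contra hne
  have hj : j₁ ≠ j₂ := by rintro rfl; exact hne rfl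
  wlog hj₂ : (j₂ : ℕ) ≠ 0 generalizing j₁ j₂
  · exact this j₂ hy j₁ hx (Ne.symm hne) hj.symm fun h => hj (Fin.ext (by omega))
  -- `a (ι 0) j₂` lies in the `j₂`-th set only through its replaced entry, `a (ι 0) j₁` only
  -- through an unreplaced one, so `ι 0` equals both `σ (ι j₂)` and `ι j₂`.
  obtain ⟨l₂, hl₂⟩ := hy j₂
  obtain ⟨l₁, hl₁⟩ := hx j₂
  exact hσ _ ((eq_of_apply_eq_ite_self ha hl₂ hj₂).symm.trans (eq_of_apply_eq_ite_of_ne ha hl₁ hj))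

/-- **The filter lemma.** Let `n, m` be strictly positive natural numbers and `σ` a
fixed-point-free permutation of `Fin m`. Given distinct elements `a i j`
(`i : Fin m`, `j : Fin n`), and choices `ι k ∈ Fin m` for each `k`, consider the `n`
sets where the `k`-th set is `{ a (ι k) 1, …, a (ι k) n }` except that (for `k ≠ 0`,
i.e. all but the first set) its `k`-th element is replaced by `a (σ (ι k)) k`.
Then the intersection of these `n` sets has at most one element. -/
theorem filter_lemma {α : Type} (n m : ℕ) (hn : 0 < n) (hm : 0 < m)
    (σ : Equiv.Perm (Fin m)) (hσ : ∀ i, σ i ≠ i)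
    (a : Fin m → Fin n → α)
    (ha : Function.Injective (fun p : Fin m × Fin n => a p.1 p.2))
    (ι : Fin n → Fin m) :
    (⋂ k : Fin n,
        { x : α | ∃ j : Fin n,
            x = if (k : ℕ) ≠ 0 ∧ j = k then a (σ (ι k)) j else a (ι k) j }).Subsingleton :=
  filter_lemma_general n m hn σ hσ a ha ι
end

section
/- Let 𝕊 and 𝕋 be algebraic theories with binary terms p (in 𝕊) and v (in 𝕋) such that: p is commutative and idempotent; any 𝕊-term provably equal to p(1,2) has at most the free variables {1,2}; v is idempotent; any 𝕋-term provably equal to a variable x has free variables contained in {x}; and any 𝕋-term provably equal to v(1,2) has at least two free variables. Then there exists no composite theory of 𝕊 and 𝕋 (a theory containing both in which every term separates essentially uniquely as a 𝕋-term of 𝕊-terms). -/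
/-! ### Algebraic theories, equational logic, and composite theories -/

structure Signature where
  Op : Type
  ar : Op → Nat

inductive Term (Sg : Signature) (V : Type) : Type
  | var : V → Term Sg V
  | op : (o : Sg.Op) → (Fin (Sg.ar o) → Term Sg V) → Term Sg V

def Term.subst {Sg : Signature} {V W : Type} : Term Sg V → (V → Term Sg W) → Term Sg W
  | .var v, f => f v
  | .op o ts, f => .op o (fun i => (ts i).subst f)

/-- Renaming of variables. -/
def Term.rename {Sg : Signature} {V W : Type} (f : V → W) (t : Term Sg V) : Term Sg W :=
  t.subst (fun v => .var (f v))

/-- The set of free variables of a term. -/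
def Term.fv {Sg : Signature} {V : Type} : Term Sg V → Set V
  | .var v => {v}
  | .op _ ts => ⋃ i, (ts i).fv

/-- An algebraic theory: a signature together with a set of equations (axioms),
given as pairs of terms over the variables ℕ. -/
structure Theory where
  sig : Signature
  Ax : Term sig Nat → Term sig Nat → Prop

/-- Provable equality in equational logic over a theory. -/
inductive Theory.Eq (T : Theory) : {V : Type} → Term T.sig V → Term T.sig V → Prop
  | ax {V : Type} {s t : Term T.sig Nat} (h : T.Ax s t) (f : Nat → Term T.sig V) :
      Theory.Eq T (s.subst f) (t.subst f)
  | refl {V : Type} (t : Term T.sig V) : Theory.Eq T t t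
  | symm {V : Type} {s t : Term T.sig V} : Theory.Eq T s t → Theory.Eq T t s
  | trans {V : Type} {s t u : Term T.sig V} :
      Theory.Eq T s t → Theory.Eq T t u → Theory.Eq T s u
  | congr {V : Type} (o : T.sig.Op) {ts ts' : Fin (T.sig.ar o) → Term T.sig V}
      (h : ∀ i, Theory.Eq T (ts i) (ts' i)) : Theory.Eq T (.op o ts) (.op o ts')
  | subst {V W : Type} {s t : Term T.sig V} (f : V → Term T.sig W) :
      Theory.Eq T s t → Theory.Eq T (s.subst f) (t.subst f)

/-- Disjoint union of two signatures. -/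
def Signature.sum (A B : Signature) : Signature := ⟨A.Op ⊕ B.Op, Sum.elim A.ar B.ar⟩

/-- Embedding of terms of the first theory into the sum signature. -/
def Term.inL {A B : Signature} {V : Type} : Term A V → Term (A.sum B) V
  | .var v => .var v
  | .op o ts => .op (Sum.inl o) (fun i => (ts i).inL)

/-- Embedding of terms of the second theory into the sum signature. -/
def Term.inR {A B : Signature} {V : Type} : Term B V → Term (A.sum B) V
  | .var v => .var v
  | .op o ts => .op (Sum.inr o) (fun i => (ts i).inR)

/-- A closed term, regarded as a term over any variable set. -/
def Term.ofClosed {Sg : Signature} {V : Type} (t : Term Sg Empty) : Term Sg V :=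
  t.rename (fun x => x.elim)

/-- A candidate composite theory of `S` and `T`: a theory over the disjoint
union of the two signatures. -/
structure Composite (S T : Theory) where
  Ax : Term (S.sig.sum T.sig) Nat → Term (S.sig.sum T.sig) Nat → Prop

def Composite.U {S T : Theory} (C : Composite S T) : Theory := ⟨S.sig.sum T.sig, C.Ax⟩

/-- A separated term: a `T`-term with `S`-terms substituted for its variables. -/
def sep {S T : Theory} {V : Type} (t : Term T.sig Nat) (σ : Nat → Term S.sig V) :
    Term (S.sig.sum T.sig) V :=
  (Term.inR (A := S.sig) t).subst (fun n => Term.inL (σ n))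

/-- `C` is a composite theory of `S` and `T` in the sense of Pirog–Staton:
it contains both theories, and satisfies separation and essential uniqueness. -/
structure IsComposite {S T : Theory} (C : Composite S T) : Prop where
  containsS : ∀ {V : Type} (s s' : Term S.sig V), S.Eq s s' → C.U.Eq s.inL s'.inL
  containsT : ∀ {V : Type} (t t' : Term T.sig V), T.Eq t t' → C.U.Eq t.inR t'.inR
  separation : ∀ {V : Type} (u : Term (S.sig.sum T.sig) V),
      ∃ (t : Term T.sig Nat) (σ : Nat → Term S.sig V), C.U.Eq u (sep t σ)
  essUniq : ∀ {V : Type} (t t' : Term T.sig Nat) (σ σ' : Nat → Term S.sig V),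
      C.U.Eq (sep t σ) (sep t' σ') →
      ∃ (Z : Type) (f g : Nat → Z),
        T.Eq (t.rename f) (t'.rename g) ∧
        (∀ i j, f i = f j ↔ S.Eq (σ i) (σ j)) ∧
        (∀ i j, g i = g j ↔ S.Eq (σ' i) (σ' j)) ∧
        (∀ i j, f i = g j ↔ S.Eq (σ i) (σ' j))

/-- Property: any term provably equal to a variable-free term is variable-free. -/
def VarFree0 (T : Theory) : Prop :=
  ∀ (V : Type) (t t' : Term T.sig V), t.fv = ∅ → T.Eq t t' → t'.fv = ∅

/-- Property: any term provably equal to a variable `x` has free variables `⊆ {x}`. -/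
def VarSingle (T : Theory) : Prop :=
  ∀ (V : Type) (x : V) (t : Term T.sig V), T.Eq t (.var x) → t.fv ⊆ {x}

/-- Property: every operation of positive arity has a unit constant. -/
def HasUnits (S : Theory) : Prop :=
  ∀ o : S.sig.Op, 1 ≤ S.sig.ar o →
    ∃ e : Term S.sig Empty, ∀ k : Fin (S.sig.ar o),
      S.Eq (.op o (fun i => if i = k then .var (0 : Nat) else e.ofClosed)) (.var 0)

/-- Application of a term with (at most) free variables `0, 1` to two arguments. -/
def app2 {Sg : Signature} {V : Type} (t : Term Sg Nat) (A B : Term Sg V) : Term Sg V :=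
  t.subst (fun n => if n = 0 then A else B)

/-!
Separate `u = p(v(x,y), v(z,w))` in a composite theory. Identifying `z` with `x` and `w` with `y`
turns `u` into `v(x,y)`, and identifying `y` with `x` and `w` with `z` turns it into `p(x,z)`;
essential uniqueness for these two instances forces the separation of `u` to be
`v(p(x,z), p(y,w))`. This interchange law and the idempotence of `v` make `p` distribute over `v`,
and expanding `u` by distributivity and commutativity yields the second separated form
`v(v(p(x,z), p(y,z)), v(p(x,w), p(y,w)))`. Essential uniqueness then makes `p(y,z)` equal in `𝕊`
to `p(x,z)` or to `p(y,w)`, which is impossible because `p` is commutative and idempotent and no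
`𝕊`-term equal to `p` has a free variable besides `0` and `1`.
-/

namespace Term

variable {Sg A B : Signature} {V W X : Type}

@[simp] theorem var_subst (v : V) (f : V → Term Sg W) : (var v).subst f = f v := rfl

@[simp] theorem var_rename (v : V) (f : V → W) : (var v : Term Sg V).rename f = var (f v) := rfl

@[simp] theorem inL_var (v : V) : (var v : Term A V).inL (B := B) = var v := rfl

theorem subst_subst (t : Term Sg V) (f : V → Term Sg W) (g : W → Term Sg X) :
    (t.subst f).subst g = t.subst fun v => (f v).subst g := by
  induction t with
  | var v => rfl
  | op o ts ih => exact congrArg (op o) (funext ih)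

theorem subst_var (t : Term Sg V) : t.subst var = t := by
  induction t with
  | var v => rfl
  | op o ts ih => exact congrArg (op o) (funext ih)

theorem subst_congr {t : Term Sg V} {f g : V → Term Sg W} (h : ∀ v ∈ t.fv, f v = g v) :
    t.subst f = t.subst g := by
  induction t with
  | var v => exact h v rfl
  | op o ts ih =>
    exact congrArg (op o) (funext fun i => ih i fun v hv => h v (Set.mem_iUnion.2 ⟨i, hv⟩))

theorem mem_fv_subst {x : W} (t : Term Sg V) (f : V → Term Sg W) :
    x ∈ (t.subst f).fv ↔ ∃ v ∈ t.fv, x ∈ (f v).fv := by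
  induction t with
  | var v => simp [fv]
  | op o ts ih =>
    simp only [subst, fv, Set.mem_iUnion, ih]
    exact ⟨fun ⟨i, v, hv, hx⟩ => ⟨v, ⟨i, hv⟩, hx⟩, fun ⟨v, ⟨i, hv⟩, hx⟩ => ⟨i, v, hv, hx⟩⟩

theorem rename_rename (t : Term Sg V) (f : V → W) (g : W → X) :
    (t.rename f).rename g = t.rename fun v => g (f v) :=
  subst_subst t _ _

theorem rename_congr {t : Term Sg V} {f g : V → W} (h : ∀ v ∈ t.fv, f v = g v) :
    t.rename f = t.rename g :=
  subst_congr fun v hv => congrArg var (h v hv)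

theorem rename_eq_self {t : Term Sg V} {f : V → V} (h : ∀ v ∈ t.fv, f v = v) : t.rename f = t :=
  (rename_congr h).trans (subst_var t)

theorem mem_fv_rename {x : W} (t : Term Sg V) (f : V → W) :
    x ∈ (t.rename f).fv ↔ ∃ v ∈ t.fv, f v = x := by
  simp [rename, mem_fv_subst, fv, eq_comm]

theorem inL_subst (s : Term A V) (f : V → Term A W) :
    (s.subst f).inL (B := B) = s.inL.subst fun v => (f v).inL := by
  induction s with
  | var v => rfl
  | op o ts ih => exact congrArg (op _) (funext ih)

theorem inR_subst (t : Term B V) (f : V → Term B W) :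
    (t.subst f).inR (A := A) = t.inR.subst fun v => (f v).inR := by
  induction t with
  | var v => rfl
  | op o ts ih => exact congrArg (op _) (funext ih)

theorem inL_rename (s : Term A V) (f : V → W) : (s.rename f).inL (B := B) = s.inL.rename f :=
  inL_subst s _

theorem inR_rename (t : Term B V) (f : V → W) : (t.rename f).inR (A := A) = t.inR.rename f :=
  inR_subst t _

theorem fv_inL (s : Term A V) : (s.inL (B := B)).fv = s.fv := by
  induction s with
  | var v => rfl
  | op o ts ih => exact congrArg Set.iUnion (funext ih)

theorem fv_inR (t : Term B V) : (t.inR (A := A)).fv = t.fv := by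
  induction t with
  | var v => rfl
  | op o ts ih => exact congrArg Set.iUnion (funext ih)

end Term

open Term

namespace Theory.Eq

variable {T : Theory} {V W : Type}

theorem of_eq {s t : Term T.sig V} (h : s = t) : T.Eq s t :=
  h ▸ refl s

theorem trans_eq {s t t' : Term T.sig V} (h : T.Eq s t) (e : t = t') : T.Eq s t' :=
  e ▸ h

theorem rename {s t : Term T.sig V} (h : T.Eq s t) (f : V → W) : T.Eq (s.rename f) (t.rename f) :=
  h.subst _

theorem subst_congr (t : Term T.sig V) {f g : V → Term T.sig W}
    (h : ∀ v ∈ t.fv, T.Eq (f v) (g v)) : T.Eq (t.subst f) (t.subst g) := by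
  induction t with
  | var v => exact h v rfl
  | op o ts ih => exact congr o fun i => ih i fun v hv => h v (Set.mem_iUnion.2 ⟨i, hv⟩)

end Theory.Eq

section App2

variable {Sg A B : Signature} {V W : Type}

theorem app2_subst (w : Term Sg ℕ) (a b : Term Sg V) (F : V → Term Sg W) :
    (app2 w a b).subst F = app2 w (a.subst F) (b.subst F) := by
  simp only [app2, subst_subst]
  congr 1
  funext n
  split <;> rfl

theorem app2_rename (w : Term Sg ℕ) (a b : Term Sg V) (f : V → W) :
    (app2 w a b).rename f = app2 w (a.rename f) (b.rename f) :=
  app2_subst w a b _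

theorem inL_app2 (w : Term A ℕ) (a b : Term A V) :
    (app2 w a b).inL (B := B) = app2 w.inL a.inL b.inL := by
  simp only [app2, inL_subst]
  congr 1
  funext n
  split <;> rfl

theorem inR_app2 (w : Term B ℕ) (a b : Term B V) :
    (app2 w a b).inR (A := A) = app2 w.inR a.inR b.inR := by
  simp only [app2, inR_subst]
  congr 1
  funext n
  split <;> rfl

theorem subst_eq_app2 {w : Term Sg ℕ} (hw : w.fv ⊆ {0, 1}) (F : ℕ → Term Sg V) :
    w.subst F = app2 w (F 0) (F 1) :=
  subst_congr fun n hn => by rcases hw hn with rfl | rfl <;> rfl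

theorem app2_var_var {w : Term Sg ℕ} (hw : w.fv ⊆ {0, 1}) : app2 w (var 0) (var 1) = w :=
  (subst_eq_app2 hw var).symm.trans (subst_var w)

theorem app2_self (w : Term Sg ℕ) (c : Term Sg V) :
    app2 w c c = (w.rename fun _ => 0).subst fun _ => c := by
  simp [app2, rename, subst_subst]

theorem app2_swap {w : Term Sg ℕ} (hw : w.fv ⊆ {0, 1}) (a b : Term Sg V) :
    app2 w b a = (w.rename (Equiv.swap 0 1)).subst fun n => if n = 0 then a else b := by
  rw [rename, subst_subst, subst_eq_app2 hw]
  simp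

theorem mem_fv_app2_left {w : Term Sg ℕ} (hw : 0 ∈ w.fv) {a : Term Sg V} {x : V} (hx : x ∈ a.fv)
    (b : Term Sg V) : x ∈ (app2 w a b).fv :=
  (mem_fv_subst _ _).2 ⟨0, hw, hx⟩

theorem mem_fv_app2_right {w : Term Sg ℕ} (hw : 1 ∈ w.fv) (a : Term Sg V) {b : Term Sg V} {x : V}
    (hx : x ∈ b.fv) : x ∈ (app2 w a b).fv :=
  (mem_fv_subst _ _).2 ⟨1, hw, hx⟩

variable {T : Theory}

theorem Theory.Eq.app2_congr (w : Term T.sig ℕ) {a a' b b' : Term T.sig V} (ha : T.Eq a a')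
    (hb : T.Eq b b') : T.Eq (app2 w a b) (app2 w a' b') :=
  Theory.Eq.subst_congr w fun n _ => by split <;> assumption

theorem Theory.Eq.app2_self_of_idem {w : Term T.sig ℕ} (hw : T.Eq (w.rename fun _ => 0) (var 0))
    (c : Term T.sig V) : T.Eq (app2 w c c) c := by
  rw [app2_self]
  exact hw.subst _

theorem Theory.Eq.app2_comm_of_comm {w : Term T.sig ℕ} (hw : w.fv ⊆ {0, 1})
    (hcomm : T.Eq w (w.rename (Equiv.swap 0 1))) (a b : Term T.sig V) :
    T.Eq (app2 w a b) (app2 w b a) := by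
  rw [app2_swap hw a b]
  exact hcomm.subst _

end App2

namespace VarSingle

variable {T : Theory}

theorem of_forall_eq_fv_subset {p : Term T.sig ℕ} {A : Set ℕ} {n : ℕ} (hn : n ∉ A)
    (hp : ∀ p', T.Eq p p' → p'.fv ⊆ A) : VarSingle T := by
  classical
  intro V x s h m hm
  by_contra hmx
  let F : V → Term T.sig ℕ := fun y => if y = x then p else var n
  have hF : (var x).subst F = p := by simp [F]
  refine hn (hp _ (hF ▸ h.subst F).symm ((mem_fv_subst _ _).2 ⟨m, hm, ?_⟩))
  simp [F, show m ≠ x from hmx, fv]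

theorem eq_of_var_eq_var (hT : VarSingle T) {V : Type} {a b : V} (h : T.Eq (var a) (var b)) :
    a = b :=
  hT V b (var a) h rfl

theorem apply_eq_of_rename_eq_var (hT : VarSingle T) {V W : Type} {t : Term T.sig V}
    {f : V → W} {a : W} (h : T.Eq (t.rename f) (var a)) {x : V} (hx : x ∈ t.fv) : f x = a :=
  hT W a _ h ((mem_fv_rename _ _).2 ⟨x, hx, rfl⟩)

theorem eq_rename_add_of_rename_mod_two_eq_var (hT : VarSingle T) {s q : Term T.sig ℕ} {c : ℕ}
    (hmod : T.Eq (s.rename (· % 2)) (var c))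
    (hdiv : T.Eq (s.rename fun n => 2 * (n / 2)) q) : T.Eq s (q.rename (c + ·)) := by
  have hs : (s.rename fun n => 2 * (n / 2)).rename (c + ·) = s := by
    rw [rename_rename]
    exact rename_eq_self fun n hn => by
      have := hT.apply_eq_of_rename_eq_var hmod hn
      omega
  rw [← hs]
  exact hdiv.rename _

variable {w : Term T.sig ℕ}

theorem fv_subset_of_eq_rename (hT : VarSingle T) (hw : w.fv ⊆ {0, 1})
    (hidem : T.Eq (w.rename fun _ => 0) (var 0)) {Z : Type} {s : Term T.sig Z} {g : ℕ → Z}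
    (h : T.Eq s (w.rename g)) : s.fv ⊆ {g 0, g 1} := by
  classical
  intro z hz
  let ρ : Z → Z := fun z => if z = g 1 then g 0 else z
  have hwρ : (w.rename g).rename ρ = (w.rename fun _ => 0).rename fun _ => g 0 := by
    rw [rename_rename, rename_rename]
    exact rename_congr fun n hn => by rcases hw hn with rfl | rfl <;> simp [ρ]
  have hρ := hT.apply_eq_of_rename_eq_var ((h.rename ρ).trans (hwρ ▸ hidem.rename _)) hz
  by_cases hz1 : z = g 1
  · exact .inr hz1
  · simpa [ρ, hz1] using hρ

theorem not_app2_var_eq_var (hT : VarSingle T) (hw : w.fv ⊆ {0, 1})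
    (hcomm : T.Eq w (w.rename (Equiv.swap 0 1))) {a c : ℕ} (hac : a ≠ c) :
    ¬ T.Eq (app2 w (var a) (var c)) (var c) := by
  intro h
  have h' : T.Eq (app2 w (var c) (var a)) (var a) := by
    simpa [app2_rename] using h.rename (Equiv.swap a c)
  exact hac (hT.eq_of_var_eq_var (h'.symm.trans ((hcomm.app2_comm_of_comm hw _ _).trans h)))

theorem not_app2_eq_app2 (hT : VarSingle T) (hw : w.fv ⊆ {0, 1})
    (hcomm : T.Eq w (w.rename (Equiv.swap 0 1))) (hidem : T.Eq (w.rename fun _ => 0) (var 0))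
    {a b c : ℕ} (hab : a ≠ b) (hac : a ≠ c) :
    ¬ T.Eq (app2 w (var a) (var c)) (app2 w (var b) (var c)) := by
  intro h
  have h' : T.Eq (app2 w (var a) (var c)) (app2 w (var c) (var c)) := by
    simpa [app2_rename, hab] using h.rename fun n => if n = b then c else n
  exact hT.not_app2_var_eq_var hw hcomm hac (h'.trans (hidem.app2_self_of_idem _))

end VarSingle

section Sep

variable {S T : Theory} {V W : Type}

@[simp] theorem sep_var (k : ℕ) (σ : ℕ → Term S.sig V) :
    sep (T := T) (var k) σ = (σ k).inL :=
  rfl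

theorem sep_var_right (t : Term T.sig ℕ) : sep (S := S) t var = t.inR :=
  subst_var _

theorem sep_rename (t : Term T.sig ℕ) (σ : ℕ → Term S.sig V) (f : V → W) :
    (sep t σ).rename f = sep t fun n => (σ n).rename f := by
  simp only [sep, rename, subst_subst, inL_subst]
  rfl

theorem sep_rename_left (t : Term T.sig ℕ) (c : ℕ → ℕ) (σ : ℕ → Term S.sig V) :
    sep (t.rename c) σ = sep t fun n => σ (c n) := by
  rw [sep, sep, inR_rename, rename, subst_subst]
  rfl

theorem sep_eq_app2 {w : Term T.sig ℕ} (hw : w.fv ⊆ {0, 1}) (σ : ℕ → Term S.sig V) :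
    sep w σ = app2 w.inR (σ 0).inL (σ 1).inL := by
  rw [sep, subst_eq_app2 (fv_inR w ▸ hw)]

theorem sep_app2 (w a b : Term T.sig ℕ) (σ : ℕ → Term S.sig V) :
    sep (app2 w a b) σ = app2 w.inR (sep a σ) (sep b σ) := by
  simp only [sep, inR_app2, app2_subst]

theorem Theory.Eq.rename_eq_sep {C : Composite S T} {u : Term (S.sig.sum T.sig) V}
    {t : Term T.sig ℕ} {σ : ℕ → Term S.sig V} (h : C.U.Eq u (sep t σ)) (f : V → W) :
    C.U.Eq (u.rename f) (sep t fun i => (σ i).rename f) :=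
  (h.rename f).trans (.of_eq (sep_rename t σ f))

end Sep

namespace IsComposite

variable {S T : Theory} {C : Composite S T} {V : Type}

theorem sep_congr_left (hC : IsComposite C) {t t' : Term T.sig ℕ} (h : T.Eq t t')
    (σ : ℕ → Term S.sig V) : C.U.Eq (sep t σ) (sep t' σ) :=
  (hC.containsT _ _ h).subst _

theorem sep_congr_right (hC : IsComposite C) (t : Term T.sig ℕ) {σ σ' : ℕ → Term S.sig V}
    (h : ∀ i ∈ t.fv, S.Eq (σ i) (σ' i)) : C.U.Eq (sep t σ) (sep t σ') :=
  Theory.Eq.subst_congr (T := C.U) t.inR fun i hi => hC.containsS _ _ (h i (fv_inR t ▸ hi))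

theorem forall_eq_of_sep_eq_inL (hC : IsComposite C) (hT : VarSingle T) {t : Term T.sig ℕ}
    {σ : ℕ → Term S.sig V} {s : Term S.sig V} (h : C.U.Eq (sep t σ) s.inL) :
    ∀ i ∈ t.fv, S.Eq (σ i) s := by
  obtain ⟨Z, f, g, hfg, -, -, hσ⟩ := hC.essUniq t (var 0) σ (fun _ => s) h
  exact fun i hi => (hσ i 0).1 (hT.apply_eq_of_rename_eq_var hfg hi)

variable {v : Term T.sig ℕ}

theorem forall_eq_or_eq_of_sep_eq_sep (hC : IsComposite C) (hT : VarSingle T)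
    (hv : v.fv ⊆ {0, 1}) (videm : T.Eq (v.rename fun _ => 0) (var 0)) {t : Term T.sig ℕ}
    {σ τ : ℕ → Term S.sig V} (h : C.U.Eq (sep t σ) (sep v τ)) :
    ∀ i ∈ t.fv, S.Eq (σ i) (τ 0) ∨ S.Eq (σ i) (τ 1) := by
  obtain ⟨Z, f, g, hfg, -, -, hστ⟩ := hC.essUniq t v σ τ h
  intro i hi
  rcases hT.fv_subset_of_eq_rename hv videm hfg ((mem_fv_rename _ _).2 ⟨i, hi, rfl⟩) with h0 | h1
  exacts [.inl ((hστ i 0).1 h0), .inr ((hστ i 1).1 h1)]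

theorem exists_rename_of_sep_eq_sep (hC : IsComposite C) (hT : VarSingle T)
    (hv : v.fv ⊆ {0, 1}) (videm : T.Eq (v.rename fun _ => 0) (var 0)) {t : Term T.sig ℕ}
    {σ τ : ℕ → Term S.sig V} (hτ : ¬ S.Eq (τ 0) (τ 1)) (h : C.U.Eq (sep t σ) (sep v τ)) :
    ∃ c : ℕ → ℕ, T.Eq (t.rename c) v ∧ ∀ i ∈ t.fv, S.Eq (σ i) (τ (c i)) := by
  classical
  obtain ⟨Z, f, g, hfg, -, hττ, hστ⟩ := hC.essUniq t v σ τ h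
  have hg : g 1 ≠ g 0 := fun e => hτ ((hττ 1 0).1 e).symm
  let c : Z → ℕ := fun z => if z = g 0 then 0 else 1
  refine ⟨fun i => c (f i), ?_, fun i hi => (hστ i _).1 ?_⟩
  · have hcg : v.rename (fun n => c (g n)) = v :=
      rename_eq_self fun n hn => by rcases hv hn with rfl | rfl <;> simp [c, hg]
    have := hfg.rename c
    rwa [rename_rename, rename_rename, hcg] at this
  · rcases hT.fv_subset_of_eq_rename hv videm hfg ((mem_fv_rename _ _).2 ⟨i, hi, rfl⟩)
      with e | (e : f i = g 1) <;> simp [c, e, hg]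

end IsComposite

namespace IsComposite

variable {S T : Theory} {C : Composite S T} {V : Type} {p : Term S.sig ℕ} {v : Term T.sig ℕ}

theorem app2_inL_self (hC : IsComposite C) (pidem : S.Eq (p.rename fun _ => 0) (var 0))
    (a : Term (S.sig.sum T.sig) V) : C.U.Eq (app2 p.inL a a) a := by
  have := hC.containsS _ _ pidem
  rw [inL_rename] at this
  exact this.app2_self_of_idem a

theorem app2_inR_self (hC : IsComposite C) (videm : T.Eq (v.rename fun _ => 0) (var 0))
    (a : Term (S.sig.sum T.sig) V) : C.U.Eq (app2 v.inR a a) a := by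
  have := hC.containsT _ _ videm
  rw [inR_rename] at this
  exact this.app2_self_of_idem a

theorem app2_inL_comm (hC : IsComposite C) (hp : p.fv ⊆ {0, 1})
    (pcomm : S.Eq p (p.rename (Equiv.swap 0 1))) (a b : Term (S.sig.sum T.sig) V) :
    C.U.Eq (app2 p.inL a b) (app2 p.inL b a) := by
  have := hC.containsS _ _ pcomm
  rw [inL_rename] at this
  exact this.app2_comm_of_comm (fv_inL p ▸ hp) a b

theorem interchange_var (hC : IsComposite C) (hS : VarSingle S) (hT : VarSingle T)
    (pidem : S.Eq (p.rename fun _ => 0) (var 0)) (hv : v.fv ⊆ {0, 1})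
    (videm : T.Eq (v.rename fun _ => 0) (var 0)) :
    C.U.Eq (app2 p.inL (app2 v.inR (var 0) (var 1)) (app2 v.inR (var 2) (var 3)))
      (app2 v.inR (app2 p.inL (var 0) (var 2)) (app2 p.inL (var 1) (var 3))) := by
  -- `0, 1, 2, 3` stand for `x, y, z, w`: renaming by `n % 2` identifies `z` with `x` and `w` with
  -- `y`, renaming by `2 * (n / 2)` identifies `y` with `x` and `w` with `z`.
  set u : Term (S.sig.sum T.sig) ℕ :=
    app2 p.inL (app2 v.inR (var 0) (var 1)) (app2 v.inR (var 2) (var 3))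
  obtain ⟨t, σ, hsep⟩ := hC.separation u
  have hmod : C.U.Eq (sep t fun i => (σ i).rename (· % 2)) (sep v var) := by
    have hu : u.rename (· % 2) = app2 p.inL v.inR v.inR := by
      simp only [u, app2_rename, var_rename, Nat.reduceMod]
      rw [app2_var_var (fv_inR v ▸ hv)]
    exact ((hsep.rename_eq_sep _).symm.trans_eq hu).trans
      ((hC.app2_inL_self pidem _).trans_eq (sep_var_right v).symm)
  have hdiv : C.U.Eq (sep t fun i => (σ i).rename fun n => 2 * (n / 2))
      (app2 p (var 0) (var 2)).inL := by
    have hu : u.rename (fun n => 2 * (n / 2)) =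
        app2 p.inL (app2 v.inR (var 0) (var 0)) (app2 v.inR (var 2) (var 2)) := by
      simp [u, app2_rename]
    exact ((hsep.rename_eq_sep _).symm.trans_eq hu).trans
      ((Theory.Eq.app2_congr _ (hC.app2_inR_self videm _) (hC.app2_inR_self videm _)).trans_eq
        (inL_app2 p (var 0) (var 2)).symm)
  obtain ⟨c, htc, hσc⟩ :=
    hC.exists_rename_of_sep_eq_sep hT hv videm (mt hS.eq_of_var_eq_var zero_ne_one) hmod
  have hσ := hC.forall_eq_of_sep_eq_inL hT hdiv
  let th : ℕ → Term S.sig ℕ := fun n => app2 p (var n) (var (n + 2))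
  have hth : ∀ i ∈ t.fv, S.Eq (σ i) (th (c i)) := fun i hi => by
    simpa [th, app2_rename] using hS.eq_rename_add_of_rename_mod_two_eq_var (hσc i hi) (hσ i hi)
  have hvth : sep v th = app2 v.inR (app2 p.inL (var 0) (var 2)) (app2 p.inL (var 1) (var 3)) := by
    simp [th, sep_eq_app2 hv, inL_app2]
  have hc : C.U.Eq u (sep (t.rename c) th) :=
    (hsep.trans (hC.sep_congr_right t hth)).trans_eq (sep_rename_left t c th).symm
  exact (hc.trans (hC.sep_congr_left htc th)).trans_eq hvth

theorem interchange (hC : IsComposite C) (hS : VarSingle S) (hT : VarSingle T)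
    (pidem : S.Eq (p.rename fun _ => 0) (var 0)) (hv : v.fv ⊆ {0, 1})
    (videm : T.Eq (v.rename fun _ => 0) (var 0)) (a b c d : Term (S.sig.sum T.sig) V) :
    C.U.Eq (app2 p.inL (app2 v.inR a b) (app2 v.inR c d))
      (app2 v.inR (app2 p.inL a c) (app2 p.inL b d)) := by
  let F : ℕ → Term (S.sig.sum T.sig) V := fun n =>
    if n = 0 then a else if n = 1 then b else if n = 2 then c else d
  have e₁ : (app2 p.inL (app2 v.inR (var 0) (var 1)) (app2 v.inR (var 2) (var 3))).subst F =
      app2 p.inL (app2 v.inR a b) (app2 v.inR c d) := by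
    simp [F, app2_subst]
  have e₂ : (app2 v.inR (app2 p.inL (var 0) (var 2)) (app2 p.inL (var 1) (var 3))).subst F =
      app2 v.inR (app2 p.inL a c) (app2 p.inL b d) := by
    simp [F, app2_subst]
  have h := (hC.interchange_var hS hT pidem hv videm).subst F
  exact ((Theory.Eq.of_eq e₁).symm.trans h).trans_eq e₂

theorem left_distrib (hC : IsComposite C) (hS : VarSingle S) (hT : VarSingle T)
    (pidem : S.Eq (p.rename fun _ => 0) (var 0)) (hv : v.fv ⊆ {0, 1})
    (videm : T.Eq (v.rename fun _ => 0) (var 0)) (a b c : Term (S.sig.sum T.sig) V) :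
    C.U.Eq (app2 p.inL a (app2 v.inR b c)) (app2 v.inR (app2 p.inL a b) (app2 p.inL a c)) :=
  (Theory.Eq.app2_congr _ (hC.app2_inR_self videm a).symm (.refl _)).trans
    (hC.interchange hS hT pidem hv videm a a b c)

theorem right_distrib (hC : IsComposite C) (hS : VarSingle S) (hT : VarSingle T)
    (hp : p.fv ⊆ {0, 1}) (pcomm : S.Eq p (p.rename (Equiv.swap 0 1)))
    (pidem : S.Eq (p.rename fun _ => 0) (var 0)) (hv : v.fv ⊆ {0, 1})
    (videm : T.Eq (v.rename fun _ => 0) (var 0)) (a b c : Term (S.sig.sum T.sig) V) :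
    C.U.Eq (app2 p.inL (app2 v.inR a b) c) (app2 v.inR (app2 p.inL a c) (app2 p.inL b c)) :=
  ((hC.app2_inL_comm hp pcomm _ _).trans (hC.left_distrib hS hT pidem hv videm c a b)).trans
    (Theory.Eq.app2_congr _ (hC.app2_inL_comm hp pcomm _ _) (hC.app2_inL_comm hp pcomm _ _))

theorem distrib_eq_interchange (hC : IsComposite C) (hS : VarSingle S) (hT : VarSingle T)
    (hp : p.fv ⊆ {0, 1}) (pcomm : S.Eq p (p.rename (Equiv.swap 0 1)))
    (pidem : S.Eq (p.rename fun _ => 0) (var 0)) (hv : v.fv ⊆ {0, 1})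
    (videm : T.Eq (v.rename fun _ => 0) (var 0)) (a b c d : Term (S.sig.sum T.sig) V) :
    C.U.Eq (app2 v.inR (app2 v.inR (app2 p.inL a c) (app2 p.inL b c))
        (app2 v.inR (app2 p.inL a d) (app2 p.inL b d)))
      (app2 v.inR (app2 p.inL a c) (app2 p.inL b d)) :=
  ((hC.left_distrib hS hT pidem hv videm _ _ _).trans
    (Theory.Eq.app2_congr _ (hC.right_distrib hS hT hp pcomm pidem hv videm _ _ _)
      (hC.right_distrib hS hT hp pcomm pidem hv videm _ _ _))).symm.trans
    (hC.interchange hS hT pidem hv videm a b c d)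

end IsComposite

theorem no_composite_plotkin_general (S T : Theory)
    (p : Term S.sig Nat)
    (v : Term T.sig Nat) (hv : v.fv ⊆ {0, 1})
    (pcomm : S.Eq p (p.subst (fun n => .var (if n = 0 then 1 else if n = 1 then 0 else n))))
    (pidem : S.Eq (p.subst (fun _ => .var (0 : Nat))) (.var 0))
    (pvars : ∀ p' : Term S.sig Nat, S.Eq p p' → p'.fv ⊆ {0, 1})
    (videm : T.Eq (v.subst (fun _ => .var (0 : Nat))) (.var 0))
    (vvar : ∀ (V : Type) (x : V) (v' : Term T.sig V), T.Eq (.var x) v' → v'.fv ⊆ {x})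
    (vbin : ∀ v' : Term T.sig Nat, T.Eq v v' → ¬ ∃ x : Nat, v'.fv ⊆ {x}) :
    ∀ C : Composite S T, ¬ IsComposite C := by
  intro C hC
  have hS : VarSingle S := .of_forall_eq_fv_subset (n := 2) (by simp) pvars
  have hT : VarSingle T := fun V x t h => vvar V x t h.symm
  have hp : p.fv ⊆ {0, 1} := pvars p (.refl p)
  have hv0 : 0 ∈ v.fv := by_contra fun h =>
    vbin v (.refl v) ⟨1, fun x hx => Or.resolve_left (hv hx) fun e => h (e ▸ hx)⟩
  have hv1 : 1 ∈ v.fv := by_contra fun h =>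
    vbin v (.refl v) ⟨0, fun x hx => Or.resolve_right (hv hx) fun e => h (e ▸ hx)⟩
  let t : Term T.sig ℕ := app2 v (app2 v (var 0) (var 1)) (app2 v (var 2) (var 3))
  let σ : ℕ → Term S.sig ℕ := fun n => app2 p (var (n % 2)) (var (n / 2 + 2))
  let τ : ℕ → Term S.sig ℕ := fun n => app2 p (var n) (var (n + 2))
  have e₁ : sep t σ =
      app2 v.inR (app2 v.inR (app2 p.inL (var 0) (var 2)) (app2 p.inL (var 1) (var 2)))
        (app2 v.inR (app2 p.inL (var 0) (var 3)) (app2 p.inL (var 1) (var 3))) := by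
    simp [t, σ, sep_app2, inL_app2]
  have e₂ : sep v τ = app2 v.inR (app2 p.inL (var 0) (var 2)) (app2 p.inL (var 1) (var 3)) := by
    simp [τ, sep_eq_app2 hv, inL_app2]
  have key : C.U.Eq (sep t σ) (sep v τ) := (Theory.Eq.of_eq e₁).trans
    ((hC.distrib_eq_interchange hS hT hp pcomm pidem hv videm _ _ _ _).trans_eq e₂.symm)
  rcases hC.forall_eq_or_eq_of_sep_eq_sep hT hv videm key 1
    (mem_fv_app2_left hv0 (mem_fv_app2_right hv1 _ rfl) _) with h | h
  · exact hS.not_app2_eq_app2 hp pcomm pidem (a := 1) (b := 0) (c := 2) one_ne_zero (by decide) h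
  · exact hS.not_app2_eq_app2 hp pcomm pidem (a := 2) (b := 3) (c := 1) (by decide) (by decide)
      ((pcomm.app2_comm_of_comm hp _ _).symm.trans (h.trans (pcomm.app2_comm_of_comm hp _ _)))

/-- **Generalized Plotkin theorem.** If `𝕊` has a commutative idempotent binary term
`p` such that any `𝕊`-term equal to `p` has free variables among `{0,1}`, and `𝕋`
has an idempotent binary term `v` such that terms equal to a variable contain only
that variable and terms equal to `v` have at least two free variables, then there is
no composite theory of `𝕊` and `𝕋`. -/
theorem no_composite_plotkin (S T : Theory)
    (p : Term S.sig Nat) (hp : p.fv ⊆ {0, 1})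
    (v : Term T.sig Nat) (hv : v.fv ⊆ {0, 1})
    (pcomm : S.Eq p (p.subst (fun n => .var (if n = 0 then 1 else if n = 1 then 0 else n))))
    (pidem : S.Eq (p.subst (fun _ => .var (0 : Nat))) (.var 0))
    (pvars : ∀ p' : Term S.sig Nat, S.Eq p p' → p'.fv ⊆ {0, 1})
    (videm : T.Eq (v.subst (fun _ => .var (0 : Nat))) (.var 0))
    (vvar : ∀ (V : Type) (x : V) (v' : Term T.sig V), T.Eq (.var x) v' → v'.fv ⊆ {x})
    (vbin : ∀ v' : Term T.sig Nat, T.Eq v v' → ¬ ∃ x : Nat, v'.fv ⊆ {x}) :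
    ∀ C : Composite S T, ¬ IsComposite C :=
  no_composite_plotkin_general S T p v hv pcomm pidem pvars videm vvar vbin
end
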